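/- Let γ ∈ {1, −1}. For each integer n define on the open set Ω = {(t,x) ∈ ℝ² : e^x ≠ γ} the vector field L_n = e^{-nt+(n−1)x} [ e^{2x} − (n+1) γ e^{x} + (1/2) n(n+1) γ² ] (e^{x} − γ)^{−n−1} ∂_t + e^{-nt+(n−1)x} [ n e^{x} − (1/2) n(n+1) γ ] (e^{x} − γ)^{−n} ∂_x, where the exponents −n−1 and −n are integer powers. Then for all integers m, n one has [L_m, L_n] = (m − n) L_{m+n} at every point of Ω. (Realization 𝔚₃ of the Witt algebra from Theorem 1.) -/

import Mathlib

noncomputable section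

/-- Partial derivative of `f : ℝ² → ℝ` (curried) in the first variable `t`. -/
def qt (f : ℝ → ℝ → ℝ) (t x : ℝ) : ℝ := deriv (fun s => f s x) t

/-- Partial derivative in the second variable `x`. -/
def qx (f : ℝ → ℝ → ℝ) (t x : ℝ) : ℝ := deriv (fun s => f t s) x

/-- A vector field `τ ∂_t + ξ ∂_x` on ℝ² with coordinates `(t,x)`. -/
structure VF2 where
  tau : ℝ → ℝ → ℝ
  xi  : ℝ → ℝ → ℝ

/-- Action of a vector field on a function: `X(F) = τ F_t + ξ F_x`. -/
def VF2.app (X : VF2) (F : ℝ → ℝ → ℝ) (t x : ℝ) : ℝ :=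
  X.tau t x * qt F t x + X.xi t x * qx F t x

/-- Lie bracket of vector fields on ℝ². -/
def VF2.bracket (X Y : VF2) : VF2 where
  tau := fun t x => X.app Y.tau t x - Y.app X.tau t x
  xi  := fun t x => X.app Y.xi t x - Y.app X.xi t x

/-- Scalar multiple of a vector field. -/
def VF2.smul (c : ℝ) (X : VF2) : VF2 where
  tau := fun t x => c * X.tau t x
  xi  := fun t x => c * X.xi t x

/-- The vector fields of the realization 𝔚₃ (defined on `Ω = {e^x ≠ γ}`):
`L n = e^{-nt+(n-1)x}[e^{2x} - (n+1)γe^x + (1/2)n(n+1)γ²](e^x - γ)^{-n-1} ∂_t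
     + e^{-nt+(n-1)x}[n e^x - (1/2)n(n+1)γ](e^x - γ)^{-n} ∂_x`. -/
def W3 (γ : ℝ) (n : ℤ) : VF2 where
  tau := fun t x => Real.exp (-(n : ℝ) * t + ((n : ℝ) - 1) * x) *
    (Real.exp (2 * x) - ((n : ℝ) + 1) * γ * Real.exp x
      + (1 / 2) * (n : ℝ) * ((n : ℝ) + 1) * γ ^ 2) *
    (Real.exp x - γ) ^ (-n - 1 : ℤ)
  xi  := fun t x => Real.exp (-(n : ℝ) * t + ((n : ℝ) - 1) * x) *
    ((n : ℝ) * Real.exp x - (1 / 2) * (n : ℝ) * ((n : ℝ) + 1) * γ) *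
    (Real.exp x - γ) ^ (-n : ℤ)

/-!
Each `L n` has the form `e^{-nt} (A_n(x) ∂_t + B_n(x) ∂_x)`, and the bracket of two fields of
this shape is again of this shape, with coefficients built from `A`, `B` and their `x`-derivatives.
The Witt relations thus reduce to two identities between the one-variable coefficients `A_n`, `B_n`
and their derivatives. After splitting off the common factors `e^{(m-1)x}`, `e^{(n-1)x}`,
`(e^x - γ)^{-m}` and `(e^x - γ)^{-n}`, these are rational identities in `e^x`, `γ`, `m`, `n`.
-/

open Real

namespace VF2

def expMul (k : ℝ) (a b : ℝ → ℝ) : VF2 where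
  tau t x := exp (k * t) * a x
  xi t x := exp (k * t) * b x

lemma qt_exp_mul (k : ℝ) (f : ℝ → ℝ) (t x : ℝ) :
    qt (fun t x => exp (k * t) * f x) t x = k * (exp (k * t) * f x) := by
  have h : HasDerivAt (fun s => exp (k * s) * f x) (exp (k * t) * k * f x) t := by
    simpa using (((hasDerivAt_id t).const_mul k).exp).mul_const (f x)
  rw [qt, h.deriv]
  ring

lemma qx_exp_mul (k : ℝ) (f : ℝ → ℝ) (t x : ℝ) :
    qx (fun t x => exp (k * t) * f x) t x = exp (k * t) * deriv f x := by
  rw [qx, deriv_const_mul_field']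

theorem bracket_expMul (k l : ℝ) (a b c d : ℝ → ℝ) :
    bracket (expMul k a b) (expMul l c d) =
      expMul (k + l) (fun x => (l - k) * a x * c x + b x * deriv c x - d x * deriv a x)
        (fun x => l * a x * d x - k * b x * c x + b x * deriv d x - d x * deriv b x) := by
  simp only [bracket, app, expMul, qt_exp_mul, qx_exp_mul, add_mul, exp_add]
  congr 1 <;> funext t x <;> ring

end VF2

def wittTau (γ : ℝ) (n : ℤ) (x : ℝ) : ℝ :=
  exp ((n - 1) * x) * (exp (2 * x) - (n + 1) * γ * exp x + (1 / 2) * n * (n + 1) * γ ^ 2) *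
    (exp x - γ) ^ (-n - 1)

def wittXi (γ : ℝ) (n : ℤ) (x : ℝ) : ℝ :=
  exp ((n - 1) * x) * (n * exp x - (1 / 2) * n * (n + 1) * γ) * (exp x - γ) ^ (-n)

lemma W3_eq_expMul (γ : ℝ) (n : ℤ) :
    W3 γ n = VF2.expMul (-n) (wittTau γ n) (wittXi γ n) := by
  simp only [W3, VF2.expMul, wittTau, wittXi, ← mul_assoc, ← exp_add]

lemma hasDerivAt_exp_mul_mul_zpow {p : ℝ → ℝ} {p' x : ℝ} (k γ : ℝ) (j : ℤ)
    (hp : HasDerivAt p p' x) (hx : exp x ≠ γ) :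
    HasDerivAt (fun y => exp (k * y) * p y * (exp y - γ) ^ j)
      ((exp (k * x) * k * p x + exp (k * x) * p') * (exp x - γ) ^ j +
        exp (k * x) * p x * (j * (exp x - γ) ^ (j - 1) * exp x)) x := by
  have hexp : HasDerivAt (fun y => exp (k * y)) (exp (k * x) * k) x := by
    simpa using ((hasDerivAt_id x).const_mul k).exp
  have hpow : HasDerivAt (fun y => (exp y - γ) ^ j) (j * (exp x - γ) ^ (j - 1) * exp x) x := by
    have := (hasDerivAt_zpow j _ (.inl (sub_ne_zero.mpr hx))).comp x
      ((hasDerivAt_exp x).sub_const γ)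
    exact this
  exact (hexp.mul hp).mul hpow

lemma hasDerivAt_wittTau (γ : ℝ) (n : ℤ) {x : ℝ} (hx : exp x ≠ γ) :
    HasDerivAt (wittTau γ n)
      ((exp ((n - 1) * x) * (n - 1) *
            (exp (2 * x) - (n + 1) * γ * exp x + (1 / 2) * n * (n + 1) * γ ^ 2) +
          exp ((n - 1) * x) * (exp (2 * x) * 2 - (n + 1) * γ * exp x)) * (exp x - γ) ^ (-n - 1) +
        exp ((n - 1) * x) * (exp (2 * x) - (n + 1) * γ * exp x + (1 / 2) * n * (n + 1) * γ ^ 2) *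
          (((-n - 1 : ℤ) : ℝ) * (exp x - γ) ^ (-n - 1 - 1) * exp x)) x := by
  have hp : HasDerivAt
      (fun y => exp (2 * y) - (n + 1) * γ * exp y + (1 / 2) * n * (n + 1) * γ ^ 2)
      (exp (2 * x) * 2 - (n + 1) * γ * exp x) x := by
    have h2 : HasDerivAt (fun y => exp (2 * y)) (exp (2 * x) * 2) x := by
      simpa using ((hasDerivAt_id x).const_mul 2).exp
    exact (h2.sub ((hasDerivAt_exp x).const_mul _)).add_const _
  exact hasDerivAt_exp_mul_mul_zpow _ γ _ hp hx

lemma hasDerivAt_wittXi (γ : ℝ) (n : ℤ) {x : ℝ} (hx : exp x ≠ γ) :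
    HasDerivAt (wittXi γ n)
      ((exp ((n - 1) * x) * (n - 1) * (n * exp x - (1 / 2) * n * (n + 1) * γ) +
          exp ((n - 1) * x) * (n * exp x)) * (exp x - γ) ^ (-n) +
        exp ((n - 1) * x) * (n * exp x - (1 / 2) * n * (n + 1) * γ) *
          (((-n : ℤ) : ℝ) * (exp x - γ) ^ (-n - 1) * exp x)) x :=
  hasDerivAt_exp_mul_mul_zpow _ γ _ (((hasDerivAt_exp x).const_mul _).sub_const _) hx

lemma exp_cast_add_sub_one_mul (m n : ℤ) (x : ℝ) :
    exp ((((m + n : ℤ) : ℝ) - 1) * x) = exp ((m - 1) * x) * exp ((n - 1) * x) * exp x := by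
  rw [← exp_add, ← exp_add]
  push_cast
  ring_nf

lemma wittTau_bracket (γ : ℝ) (m n : ℤ) {x : ℝ} (hx : exp x ≠ γ) :
    (m - n) * wittTau γ m x * wittTau γ n x + wittXi γ m x * deriv (wittTau γ n) x -
      wittXi γ n x * deriv (wittTau γ m) x = (m - n) * wittTau γ (m + n) x := by
  have hd : exp x - γ ≠ 0 := sub_ne_zero.mpr hx
  rw [(hasDerivAt_wittTau γ m hx).deriv, (hasDerivAt_wittTau γ n hx).deriv]
  simp only [wittTau, wittXi, exp_cast_add_sub_one_mul, neg_add, zpow_add₀ hd, zpow_sub_one₀ hd,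
    two_mul, exp_add]
  push_cast
  field_simp
  ring

lemma wittXi_bracket (γ : ℝ) (m n : ℤ) {x : ℝ} (hx : exp x ≠ γ) :
    m * wittXi γ m x * wittTau γ n x - n * wittTau γ m x * wittXi γ n x +
      wittXi γ m x * deriv (wittXi γ n) x - wittXi γ n x * deriv (wittXi γ m) x =
      (m - n) * wittXi γ (m + n) x := by
  have hd : exp x - γ ≠ 0 := sub_ne_zero.mpr hx
  rw [(hasDerivAt_wittXi γ m hx).deriv, (hasDerivAt_wittXi γ n hx).deriv]
  simp only [wittTau, wittXi, exp_cast_add_sub_one_mul, neg_add, zpow_add₀ hd, zpow_sub_one₀ hd,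
    two_mul, exp_add]
  push_cast
  field_simp
  ring

theorem witt_realization_W3_general (γ : ℝ) (m n : ℤ)
    (t x : ℝ) (hx : Real.exp x ≠ γ) :
    (VF2.bracket (W3 γ m) (W3 γ n)).tau t x
      = ((m : ℝ) - (n : ℝ)) * (W3 γ (m + n)).tau t x ∧
    (VF2.bracket (W3 γ m) (W3 γ n)).xi t x
      = ((m : ℝ) - (n : ℝ)) * (W3 γ (m + n)).xi t x := by
  have hexp : exp ((-(m : ℝ) + -n) * t) = exp (-((m + n : ℤ) : ℝ) * t) := by
    push_cast
    ring_nf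
  simp only [W3_eq_expMul, VF2.bracket_expMul]
  simp only [VF2.expMul, hexp]
  constructor
  · linear_combination exp (-((m + n : ℤ) : ℝ) * t) * wittTau_bracket γ m n hx
  · linear_combination exp (-((m + n : ℤ) : ℝ) * t) * wittXi_bracket γ m n hx

/-- Realization 𝔚₃ of the Witt algebra: on `Ω = {(t,x) : e^x ≠ γ}` one has
`[L m, L n] = (m - n) L (m + n)`. -/
theorem witt_realization_W3 (γ : ℝ) (hγ : γ = 1 ∨ γ = -1) (m n : ℤ)
    (t x : ℝ) (hx : Real.exp x ≠ γ) :
    (VF2.bracket (W3 γ m) (W3 γ n)).tau t x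
      = ((m : ℝ) - (n : ℝ)) * (W3 γ (m + n)).tau t x ∧
    (VF2.bracket (W3 γ m) (W3 γ n)).xi t x
      = ((m : ℝ) - (n : ℝ)) * (W3 γ (m + n)).xi t x :=
  witt_realization_W3_general γ m n t x hx
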